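/- arXiv:1206.2039 — 7 statements merged into one kernel-verified Lean document; each statement's English description precedes it below -/
import Mathlib

section
/- Let ν be a finite positive Borel measure on [0,∞) and define φ : ℝ → ℂ by φ(x) = ∫₀^∞ e^{−λ|x|} dν(λ). Then φ is continuous and reflection positive for the triple (ℝ, −id, ℝ₊); that is: (a) the kernel (x,y) ↦ φ(x−y) on ℝ is positive definite; (b) φ(−x) = φ(x) for all x ∈ ℝ; (c) the kernel (x,y) ↦ φ(x+y) on the open half-line (0,∞) is positive definite. -/
/-!
Positive definiteness of kernels survives integration against a positive measure, so it is
enough to treat `e^{-λ|x-y|}` and `e^{-λ(x+y)}` for each fixed `λ ≥ 0`. On `x, y ≥ 0` the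
latter is the rank-one kernel `e^{-λx} e^{-λy}`. The former is a rescaling of
`e^{-|u-v|} = 2 ∫ h_u h_v`, the Gram kernel of the functions `h_u(t) = 1_{t ≤ u} e^{t-u}`.
-/

open MeasureTheory
open scoped ComplexOrder

/-- A kernel `K : X × X → ℂ` is positive definite on a set `A ⊆ X` if for all points
`x₁,…,x_m ∈ A` and coefficients `c₁,…,c_m ∈ ℂ` the sum `∑ c_j conj(c_k) K(x_j, x_k)`
is a nonnegative real number (expressed via the order on `ℂ`). -/
def PosDefKernelOn {X : Type*} (A : Set X) (K : X → X → ℂ) : Prop :=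
  ∀ (m : ℕ) (x : Fin m → X), (∀ i, x i ∈ A) → ∀ c : Fin m → ℂ,
    0 ≤ ∑ j : Fin m, ∑ k : Fin m, c j * (starRingEnd ℂ) (c k) * K (x j) (x k)

namespace PosDefKernelOn

variable {X : Type*} {A : Set X} {K : X → X → ℂ}

theorem congr (hK : PosDefKernelOn A K) {K' : X → X → ℂ}
    (h : ∀ x ∈ A, ∀ y ∈ A, K x y = K' x y) : PosDefKernelOn A K' := by
  intro m x hx c
  convert hK m x hx c using 4 with j _ k _
  rw [h _ (hx j) _ (hx k)]

theorem comp {Y : Type*} {B : Set Y} {K : Y → Y → ℂ} (hK : PosDefKernelOn B K) {f : X → Y}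
    (hf : Set.MapsTo f A B) : PosDefKernelOn A fun x y => K (f x) (f y) :=
  fun m x hx c => hK m (f ∘ x) (fun i => hf (hx i)) c

theorem mono {B : Set X} (hK : PosDefKernelOn B K) (hAB : A ⊆ B) : PosDefKernelOn A K :=
  hK.comp (f := id) hAB

theorem integral {α : Type*} [MeasurableSpace α] {μ : Measure α} {K : α → X → X → ℂ}
    (hK : ∀ᵐ a ∂μ, PosDefKernelOn A (K a))
    (hint : ∀ x ∈ A, ∀ y ∈ A, Integrable (fun a => K a x y) μ) :
    PosDefKernelOn A fun x y => ∫ a, K a x y ∂μ := by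
  intro m x hx c
  have hint' : ∀ j k, Integrable (fun a => c j * (starRingEnd ℂ) (c k) * K a (x j) (x k)) μ :=
    fun j k => (hint _ (hx j) _ (hx k)).const_mul _
  have hswap : ∑ j, ∑ k, c j * (starRingEnd ℂ) (c k) * ∫ a, K a (x j) (x k) ∂μ
      = ∫ a, ∑ j, ∑ k, c j * (starRingEnd ℂ) (c k) * K a (x j) (x k) ∂μ := by
    rw [integral_finsetSum _ fun j _ => integrable_finsetSum _ fun k _ => hint' j k]
    simp_rw [integral_finsetSum _ fun k _ => hint' _ k, integral_const_mul]
  rw [hswap]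
  exact integral_nonneg_of_ae (hK.mono fun a ha => ha m x hx c)

end PosDefKernelOn

theorem posDefKernelOn_ofReal_mul {X : Type*} (A : Set X) (g : X → ℝ) :
    PosDefKernelOn A fun x y => ((g x * g y : ℝ) : ℂ) := by
  intro m x _ c
  have h : ∑ j, ∑ k, c j * (starRingEnd ℂ) (c k) * ((g (x j) * g (x k) : ℝ) : ℂ)
      = Complex.normSq (∑ j, c j * g (x j)) := by
    rw [← Complex.mul_conj, map_sum, Finset.sum_mul_sum]
    simp only [map_mul, Complex.conj_ofReal, Complex.ofReal_mul]
    exact Finset.sum_congr rfl fun j _ => Finset.sum_congr rfl fun k _ => by ring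
  rw [h]
  exact Complex.zero_le_real.2 (Complex.normSq_nonneg _)

noncomputable def expTail (u t : ℝ) : ℝ := (Set.Iic u).indicator (fun t => Real.exp (t - u)) t

theorem expTail_mul_expTail (u v : ℝ) :
    (fun t => expTail u t * expTail v t)
      = (Set.Iic (min u v)).indicator fun t => Real.exp (2 * t) * Real.exp (-(u + v)) := by
  ext t
  rw [expTail, expTail, ← Set.inter_indicator_mul, Set.Iic_inter_Iic]
  congr 1
  ext s
  rw [← Real.exp_add, ← Real.exp_add]
  ring_nf

theorem integrable_expTail_mul_expTail (u v : ℝ) :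
    Integrable fun t => expTail u t * expTail v t := by
  rw [expTail_mul_expTail, integrable_indicator_iff measurableSet_Iic]
  exact (integrableOn_exp_mul_Iic two_pos _).mul_const _

theorem integral_expTail_mul_expTail (u v : ℝ) :
    ∫ t, expTail u t * expTail v t = Real.exp (-|u - v|) / 2 := by
  rw [expTail_mul_expTail, integral_indicator measurableSet_Iic, integral_mul_const,
    integral_exp_mul_Iic two_pos, div_mul_eq_mul_div, ← Real.exp_add]
  congr 2
  rcases le_total u v with h | h
  · rw [min_eq_left h, abs_of_nonpos (by linarith)]; ring
  · rw [min_eq_right h, abs_of_nonneg (by linarith)]; ring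

open scoped ENNReal in
theorem posDefKernelOn_exp_neg_abs_sub :
    PosDefKernelOn Set.univ fun x y : ℝ => Complex.exp ((-|x - y| : ℝ) : ℂ) := by
  refine (PosDefKernelOn.integral (μ := (2 : ℝ≥0∞) • volume)
    (ae_of_all _ fun t => posDefKernelOn_ofReal_mul _ fun x => expTail x t)
    fun x _ y _ => ((integrable_expTail_mul_expTail x y).ofReal).smul_measure
      ENNReal.ofNat_ne_top).congr fun x _ y _ => ?_
  rw [integral_smul_measure, integral_complex_ofReal, integral_expTail_mul_expTail,
    ← Complex.ofReal_exp]
  simp only [ENNReal.toReal_ofNat, Complex.real_smul, Complex.ofReal_div]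
  push_cast
  ring

theorem posDefKernelOn_exp_neg_mul_abs_sub {l : ℝ} (hl : 0 ≤ l) :
    PosDefKernelOn Set.univ fun x y : ℝ => Complex.exp ((-(l * |x - y|) : ℝ) : ℂ) :=
  (posDefKernelOn_exp_neg_abs_sub.comp (f := (l * ·)) (Set.mapsTo_univ _ _)).congr
    fun x _ y _ => by rw [← mul_sub, abs_mul, abs_of_nonneg hl]

theorem posDefKernelOn_exp_neg_mul_abs_add (l : ℝ) :
    PosDefKernelOn (Set.Ici 0) fun x y : ℝ => Complex.exp ((-(l * |x + y|) : ℝ) : ℂ) :=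
  (posDefKernelOn_ofReal_mul _ fun x => Real.exp (-(l * x))).congr fun x hx y hy => by
    rw [← Real.exp_add, Complex.ofReal_exp, abs_of_nonneg (add_nonneg hx hy)]
    ring_nf

theorem norm_exp_neg_mul_le_one {l a : ℝ} (hl : 0 ≤ l) (ha : 0 ≤ a) :
    ‖Complex.exp ((-(l * a) : ℝ) : ℂ)‖ ≤ 1 := by
  rw [Complex.norm_exp_ofReal, Real.exp_le_one_iff, neg_nonpos]
  exact mul_nonneg hl ha

section LaplaceTransform

variable (ν : Measure ℝ) [IsFiniteMeasure ν]

theorem integrable_exp_neg_mul {a : ℝ} (ha : 0 ≤ a) :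
    Integrable (fun l : ℝ => Complex.exp ((-(l * a) : ℝ) : ℂ)) (ν.restrict (Set.Ici 0)) :=
  (integrable_const (1 : ℝ)).mono' (by fun_prop)
    ((ae_restrict_mem measurableSet_Ici).mono fun _ hl => norm_exp_neg_mul_le_one hl ha)

theorem continuous_integral_exp_neg_mul_abs :
    Continuous fun x : ℝ => ∫ l in Set.Ici 0, Complex.exp ((-(l * |x|) : ℝ) : ℂ) ∂ν :=
  continuous_of_dominated (fun _ => by fun_prop)
    (fun x => (ae_restrict_mem measurableSet_Ici).mono fun _ hl =>
      norm_exp_neg_mul_le_one hl (abs_nonneg x))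
    (integrable_const 1) (ae_of_all _ fun _ => by fun_prop)

end LaplaceTransform

theorem stmt_0_general (ν : Measure ℝ) [IsFiniteMeasure ν]
    (φ : ℝ → ℂ)
    (hφ : ∀ x : ℝ, φ x = ∫ l in Set.Ici (0 : ℝ), Complex.exp ((-(l * |x|) : ℝ) : ℂ) ∂ν) :
    Continuous φ ∧
    PosDefKernelOn (Set.univ : Set ℝ) (fun x y => φ (x - y)) ∧
    (∀ x : ℝ, φ (-x) = φ x) ∧
    PosDefKernelOn (Set.Ioi (0 : ℝ)) (fun x y => φ (x + y)) := by
  obtain rfl : φ = _ := funext hφ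
  have hnonneg : ∀ᵐ l ∂ν.restrict (Set.Ici 0), 0 ≤ l := ae_restrict_mem measurableSet_Ici
  refine ⟨continuous_integral_exp_neg_mul_abs ν, ?_, fun x => by simp only [abs_neg], ?_⟩
  · exact PosDefKernelOn.integral
      (hnonneg.mono fun l hl => posDefKernelOn_exp_neg_mul_abs_sub hl)
      fun x _ y _ => integrable_exp_neg_mul ν (abs_nonneg _)
  · exact PosDefKernelOn.integral
      (ae_of_all _ fun l => (posDefKernelOn_exp_neg_mul_abs_add l).mono Set.Ioi_subset_Ici_self)
      fun x _ y _ => integrable_exp_neg_mul ν (abs_nonneg _)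

/-- If `ν` is a finite positive Borel measure on `[0,∞)` and
`φ(x) = ∫₀^∞ e^{-λ|x|} dν(λ)`, then `φ` is continuous and reflection positive for
`(ℝ, -id, ℝ₊)`: the kernel `φ(x-y)` is positive definite on `ℝ`, `φ(-x) = φ(x)`,
and the kernel `φ(x+y)` is positive definite on `(0,∞)`. -/
theorem stmt_0 (ν : Measure ℝ) [IsFiniteMeasure ν] (hsupp : ν (Set.Iio (0 : ℝ)) = 0)
    (φ : ℝ → ℂ)
    (hφ : ∀ x : ℝ, φ x = ∫ l in Set.Ici (0 : ℝ), Complex.exp ((-(l * |x|) : ℝ) : ℂ) ∂ν) :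
    Continuous φ ∧
    PosDefKernelOn (Set.univ : Set ℝ) (fun x y => φ (x - y)) ∧
    (∀ x : ℝ, φ (-x) = φ x) ∧
    PosDefKernelOn (Set.Ioi (0 : ℝ)) (fun x y => φ (x + y)) :=
  stmt_0_general ν φ hφ
end

section
/- For every λ > 0 and every x ∈ ℝ one has e^{−λ|x|} = (1/π) ∫_ℝ e^{i x y} · λ/(λ² + y²) dy; equivalently, the Fourier transform of the Cauchy distribution dμ_λ(y) = (1/π) · λ/(λ² + y²) dy is the function x ↦ e^{−λ|x|}. -/
/-!
Split at `0`, `t ↦ e^{iat} e^{-l|t|}` is `e^{(l + ia)t}` on `(-∞, 0]` and `e^{(-l + ia)t}` on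
`(0, ∞)`, so its integral is `1/(l + ia) + 1/(l - ia) = 2l/(l² + a²)`. Hence the Fourier transform
of `e^{-l|t|}` is the integrable function `ξ ↦ 2l/(l² + (2πξ)²)`, and Fourier inversion at `x`,
after the substitution `y = 2πξ`, is the claimed identity.
-/

open MeasureTheory Real Set Complex
open scoped FourierTransform

lemma cexp_mul_I_mul_exp_neg_mul_abs_of_nonpos (l a : ℝ) {t : ℝ} (ht : t ≤ 0) :
    cexp (a * t * I) * (rexp (-(l * |t|)) : ℂ) = cexp ((l + a * I) * t) := by
  rw [abs_of_nonpos ht, ofReal_exp, ← Complex.exp_add]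
  push_cast
  ring_nf

lemma cexp_mul_I_mul_exp_neg_mul_abs_of_nonneg (l a : ℝ) {t : ℝ} (ht : 0 ≤ t) :
    cexp (a * t * I) * (rexp (-(l * |t|)) : ℂ) = cexp ((-l + a * I) * t) := by
  rw [abs_of_nonneg ht, ofReal_exp, ← Complex.exp_add]
  push_cast
  ring_nf

section ExpNegMulAbs

variable {l : ℝ}

lemma integrableOn_Iic_cexp_mul_I_mul_exp_neg_mul_abs (hl : 0 < l) (a : ℝ) :
    IntegrableOn (fun t : ℝ => cexp (a * t * I) * (rexp (-(l * |t|)) : ℂ)) (Iic 0) :=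
  (integrableOn_exp_mul_complex_Iic (by simpa using hl) 0).congr_fun
    (fun _ ht => (cexp_mul_I_mul_exp_neg_mul_abs_of_nonpos l a ht).symm) measurableSet_Iic

lemma integrableOn_Ioi_cexp_mul_I_mul_exp_neg_mul_abs (hl : 0 < l) (a : ℝ) :
    IntegrableOn (fun t : ℝ => cexp (a * t * I) * (rexp (-(l * |t|)) : ℂ)) (Ioi 0) :=
  (integrableOn_exp_mul_complex_Ioi (by simpa using hl) 0).congr_fun
    (fun _ ht => (cexp_mul_I_mul_exp_neg_mul_abs_of_nonneg l a (le_of_lt ht)).symm)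
    measurableSet_Ioi

lemma integrable_cexp_mul_I_mul_exp_neg_mul_abs (hl : 0 < l) (a : ℝ) :
    Integrable (fun t : ℝ => cexp (a * t * I) * (rexp (-(l * |t|)) : ℂ)) := by
  rw [← integrableOn_univ, ← Iic_union_Ioi (a := (0 : ℝ)), integrableOn_union]
  exact ⟨integrableOn_Iic_cexp_mul_I_mul_exp_neg_mul_abs hl a,
    integrableOn_Ioi_cexp_mul_I_mul_exp_neg_mul_abs hl a⟩

lemma integral_cexp_mul_I_mul_exp_neg_mul_abs (hl : 0 < l) (a : ℝ) :
    ∫ t : ℝ, cexp (a * t * I) * (rexp (-(l * |t|)) : ℂ) = 2 * (l / (l ^ 2 + a ^ 2)) := by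
  rw [← intervalIntegral.integral_Iic_add_Ioi
      (integrableOn_Iic_cexp_mul_I_mul_exp_neg_mul_abs hl a)
      (integrableOn_Ioi_cexp_mul_I_mul_exp_neg_mul_abs hl a),
    setIntegral_congr_fun measurableSet_Iic
      (fun _ ht => cexp_mul_I_mul_exp_neg_mul_abs_of_nonpos l a ht),
    setIntegral_congr_fun measurableSet_Ioi
      (fun _ ht => cexp_mul_I_mul_exp_neg_mul_abs_of_nonneg l a (le_of_lt ht)),
    integral_exp_mul_complex_Iic (by simpa using hl),
    integral_exp_mul_complex_Ioi (by simpa using hl)]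
  have h₁ : (l : ℂ) + a * I ≠ 0 := fun h => by simpa [hl.ne'] using congrArg re h
  have h₂ : -(l : ℂ) + a * I ≠ 0 := fun h => by simpa [hl.ne'] using congrArg re h
  have h₃ : (l : ℂ) ^ 2 + a ^ 2 ≠ 0 := by
    rw [show (l : ℂ) ^ 2 + a ^ 2 = -((l + a * I) * (-l + a * I)) by ring_nf; simp [I_sq]]
    exact neg_ne_zero.mpr (mul_ne_zero h₁ h₂)
  field_simp
  ring_nf
  simp [I_sq]
  ring

lemma fourier_exp_neg_mul_abs (hl : 0 < l) (ξ : ℝ) :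
    𝓕 (fun t : ℝ => (rexp (-(l * |t|)) : ℂ)) ξ = 2 * (l / (l ^ 2 + (2 * π * ξ : ℝ) ^ 2)) := by
  rw [Real.fourier_eq']
  simp only [smul_eq_mul, RCLike.inner_apply, conj_trivial]
  rw [show ((2 * π * ξ : ℝ) : ℂ) ^ 2 = ((-2 * π * ξ : ℝ) : ℂ) ^ 2 by push_cast; ring,
    ← integral_cexp_mul_I_mul_exp_neg_mul_abs hl]
  congr with t
  push_cast
  ring_nf

end ExpNegMulAbs

lemma fourierInv_comp_two_pi_mul (k : ℝ → ℂ) (x : ℝ) :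
    𝓕⁻ (fun ξ : ℝ => k (2 * π * ξ)) x = (2 * π : ℂ)⁻¹ * ∫ y : ℝ, cexp (I * x * y) * k y := by
  have h := Measure.integral_comp_mul_left (fun y : ℝ => cexp (I * x * y) * k y) (2 * π)
  rw [abs_of_pos (inv_pos.mpr two_pi_pos), Complex.real_smul] at h
  push_cast at h
  rw [Real.fourierInv_eq', ← h]
  congr with ξ
  simp only [smul_eq_mul, RCLike.inner_apply, conj_trivial]
  push_cast
  ring_nf

lemma integrable_div_sq_add_sq (l : ℝ) : Integrable (fun y : ℝ => (l : ℂ) / (l ^ 2 + y ^ 2)) := by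
  suffices Integrable (fun y : ℝ => l / (l ^ 2 + y ^ 2)) by simpa using this.ofReal (𝕜 := ℂ)
  rcases eq_or_ne l 0 with rfl | hl
  · simp
  refine ((integrable_inv_one_add_sq.comp_mul_left' (inv_ne_zero hl)).const_mul l⁻¹).congr ?_
  filter_upwards with y
  field_simp

/-- For every `λ > 0` and `x ∈ ℝ`,
`e^{-λ|x|} = (1/π) ∫_ℝ e^{ixy} · λ/(λ² + y²) dy`, i.e. the Fourier transform of the
Cauchy distribution `dμ_λ(y) = (1/π) λ/(λ²+y²) dy` is `x ↦ e^{-λ|x|}`. -/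
theorem stmt_2 (l : ℝ) (hl : 0 < l) (x : ℝ) :
    ((Real.exp (-(l * |x|)) : ℝ) : ℂ) =
      (1 / (Real.pi : ℂ)) *
        ∫ y : ℝ, Complex.exp (Complex.I * (x : ℂ) * (y : ℂ)) *
          ((l : ℂ) / ((l : ℂ) ^ 2 + (y : ℂ) ^ 2)) := by
  set f : ℝ → ℂ := fun t => rexp (-(l * |t|))
  set k : ℝ → ℂ := fun y => l / (l ^ 2 + y ^ 2)
  have hFf : 𝓕 f = fun ξ => 2 * k (2 * π * ξ) := funext (fourier_exp_neg_mul_abs hl)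
  have hf : Integrable f := by
    simpa [f] using integrable_cexp_mul_I_mul_exp_neg_mul_abs hl 0
  have hFf_int : Integrable (𝓕 f) := by
    rw [hFf]
    exact ((integrable_div_sq_add_sq l).const_mul 2).comp_mul_left' two_pi_pos.ne'
  have h_inv := hf.fourierInv_fourier_eq hFf_int (Continuous.continuousAt (by fun_prop)) (v := x)
  rw [hFf, fourierInv_comp_two_pi_mul (fun y => 2 * k y)] at h_inv
  simp_rw [mul_left_comm _ (2 : ℂ)] at h_inv
  rw [integral_const_mul] at h_inv
  rw [show (rexp (-(l * |x|)) : ℂ) = f x from rfl, ← h_inv]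
  generalize ∫ y : ℝ, cexp (I * x * y) * k y = J
  field_simp
end

section
/- For every real s ≥ 0, the kernel K(x,y) = (1 − xy)^{−s} on the open interval (−1, 1) is positive definite: for every m ∈ ℕ, all x₁,…,x_m ∈ (−1,1) and all c₁,…,c_m ∈ ℂ, the sum ∑_{j,k=1}^m c_j · conj(c_k) · (1 − x_j x_k)^{−s} is a nonnegative real number. -/
/-!
For `|t| < 1` the binomial series gives `(1 - t) ^ (-s) = ∑ₙ aₙ tⁿ` with
`aₙ = Ring.choose (s + n - 1) n = s (s + 1) ⋯ (s + n - 1) / n!`, which is `≥ 0` when `s ≥ 0`.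
Hence `(1 - x y) ^ (-s) = ∑ₙ aₙ xⁿ yⁿ` is a nonnegative combination of the rank-one kernels
`xⁿ yⁿ`, for which `∑ c_j conj(c_k) x_jⁿ x_kⁿ = |∑ c_j x_jⁿ|²`, and the nonnegative cone of `ℂ`
is closed.
-/

open scoped ComplexOrder ComplexConjugate

theorem sum_mul_conj_mul_rankOne_nonneg {ι : Type*} [Fintype ι] (c : ι → ℂ) (u : ι → ℝ) :
    0 ≤ ∑ j, ∑ k, c j * conj (c k) * ((u j * u k : ℝ) : ℂ) := by
  have h : ∑ j, ∑ k, c j * conj (c k) * ((u j * u k : ℝ) : ℂ)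
      = (∑ j, c j * u j) * conj (∑ j, c j * u j) := by
    simp only [map_sum, map_mul, Complex.conj_ofReal, Finset.sum_mul_sum]
    push_cast
    exact Finset.sum_congr rfl fun j _ ↦ Finset.sum_congr rfl fun k _ ↦ by ring
  rw [h, Complex.mul_conj']
  positivity

theorem sum_mul_conj_mul_nonneg_of_hasSum {ι : Type*} [Fintype ι] {a : ℕ → ℝ}
    (ha : ∀ n, 0 ≤ a n) {u : ℕ → ι → ℝ} {K : ι → ι → ℝ}
    (hK : ∀ j k, HasSum (fun n ↦ a n * (u n j * u n k)) (K j k)) (c : ι → ℂ) :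
    0 ≤ ∑ j, ∑ k, c j * conj (c k) * (K j k : ℂ) := by
  have h : HasSum (fun n ↦ ∑ j, ∑ k, c j * conj (c k) * ((a n * (u n j * u n k) : ℝ) : ℂ))
      (∑ j, ∑ k, c j * conj (c k) * (K j k : ℂ)) :=
    hasSum_sum fun j _ ↦ hasSum_sum fun k _ ↦ (Complex.hasSum_ofReal.mpr (hK j k)).mul_left _
  refine h.nonneg fun n ↦ ?_
  have hn : ∑ j, ∑ k, c j * conj (c k) * ((a n * (u n j * u n k) : ℝ) : ℂ)
      = a n * ∑ j, ∑ k, c j * conj (c k) * ((u n j * u n k : ℝ) : ℂ) := by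
    simp only [Finset.mul_sum]
    push_cast
    exact Finset.sum_congr rfl fun j _ ↦ Finset.sum_congr rfl fun k _ ↦ by ring
  rw [hn]
  exact mul_nonneg (Complex.zero_le_real.mpr (ha n)) (sum_mul_conj_mul_rankOne_nonneg c (u n))

theorem ascPochhammer_eval_nonneg {S : Type*} [Semiring S] [PartialOrder S] [IsOrderedRing S]
    {s : S} (hs : 0 ≤ s) (n : ℕ) : 0 ≤ (ascPochhammer S n).eval s := by
  induction n with
  | zero => simp
  | succ n ih => rw [ascPochhammer_succ_eval]; positivity

theorem Ring.choose_add_sub_one_nonneg {s : ℝ} (hs : 0 ≤ s) (n : ℕ) :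
    0 ≤ Ring.choose (s + n - 1) n := by
  have h := Ring.factorial_nsmul_multichoose_eq_ascPochhammer s n
  rw [Ring.multichoose_eq, Polynomial.ascPochhammer_smeval_eq_eval, nsmul_eq_mul] at h
  exact (mul_nonneg_iff_of_pos_left (by positivity)).mp (h ▸ ascPochhammer_eval_nonneg hs n)

theorem Real.hasSum_choose_mul_pow_one_sub_rpow_neg (s : ℝ) {t : ℝ} (ht : |t| < 1) :
    HasSum (fun n : ℕ ↦ Ring.choose (s + n - 1) n * t ^ n) ((1 - t) ^ (-s)) := by
  have ht' : t ∈ Metric.eball (0 : ℝ) 1 := by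
    simp only [Metric.mem_eball, edist_zero_right, enorm_eq_nnnorm, ENNReal.coe_lt_one_iff,
      ← NNReal.coe_lt_coe, coe_nnnorm, Real.norm_eq_abs, NNReal.coe_one, ht]
  simpa [FormalMultilinearSeries.ofScalars_apply_eq, mul_comm,
    Real.rpow_neg (by linarith [abs_lt.mp ht] : 0 ≤ 1 - t)] using
    (Real.one_div_one_sub_rpow_hasFPowerSeriesOnBall_zero s).hasSum ht'

/-- For every real `s ≥ 0`, the kernel `K(x,y) = (1 - xy)^{-s}` on the
open interval `(-1,1)` is positive definite: for all `x₁,…,x_m ∈ (-1,1)` and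
`c₁,…,c_m ∈ ℂ`, the sum `∑ c_j conj(c_k) (1 - x_j x_k)^{-s}` is a nonnegative real. -/
theorem stmt_7 (s : ℝ) (hs : 0 ≤ s) :
    ∀ (m : ℕ) (x : Fin m → ℝ), (∀ i, x i ∈ Set.Ioo (-1 : ℝ) 1) → ∀ c : Fin m → ℂ,
      0 ≤ ∑ j : Fin m, ∑ k : Fin m,
        c j * (starRingEnd ℂ) (c k) * (((1 - x j * x k) ^ (-s) : ℝ) : ℂ) := by
  intro m x hx c
  have habs : ∀ i, |x i| < 1 := fun i ↦ abs_lt.mpr (hx i)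
  refine sum_mul_conj_mul_nonneg_of_hasSum (Ring.choose_add_sub_one_nonneg hs)
    (u := fun n i ↦ x i ^ n) (fun j k ↦ ?_) c
  have hjk : |x j * x k| < 1 := by
    rw [abs_mul]
    exact mul_lt_one_of_nonneg_of_lt_one_left (abs_nonneg _) (habs j) (habs k).le
  simpa [mul_pow] using Real.hasSum_choose_mul_pow_one_sub_rpow_neg s hjk
end

section
/- Let E be a complex Hilbert space, G a group, τ : G → G an involutive automorphism, and S ⊆ G a nonempty subsemigroup (closed under the group multiplication) such that τ(s)⁻¹ ∈ S for all s ∈ S. Let π : G → U(E) be a homomorphism into the unitary group of E, and let θ be a unitary involution of E (θ² = id) with θ ∘ π(g) ∘ θ = π(τ(g)) for all g ∈ G. Let E₊ ⊆ E be a closed subspace with Re⟨θv, v⟩ ≥ 0 for all v ∈ E₊ and π(s)(E₊) ⊆ E₊ for all s ∈ S. Then for all s, t ∈ S and v, w ∈ E₊: (a) ⟨θ(π(s)v), w⟩ = ⟨θv, π(τ(s)⁻¹)w⟩; and (b) Re⟨θ(π(s)v), π(s)v⟩ ≤ Re⟨θv, v⟩ (i.e. S acts by contractions with respect to the positive semidefinite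 form ⟨θ·,·⟩ on E₊). -/
/-!
Part (a) is `θ π(s) = π(τ s) θ` combined with the unitarity of `π(τ s)`. For (b), write
`q v = Re⟨θ v, v⟩`, a positive semidefinite hermitian form on `E₊`, and `u = τ(s)⁻¹ s ∈ S`,
which satisfies `τ(u)⁻¹ = u`. By (a), `q (π s v) = Re⟨θ v, π u v⟩`, so Cauchy–Schwarz for `q`
reduces (b) to `q (π u v) ≤ q v`. Applying the same step to `u^(2^n)` gives
`q (π u^(2^n) v) ^ 2 ≤ q v * q (π u^(2^(n+1)) v)`; since `q (π g v) ≤ ‖v‖²` for every `g`,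
this forces `q (π u v) ≤ q v`, as otherwise `q (π u^(2^n) v)` would grow doubly exponentially.
-/

theorem pow_succ_mem_of_mul_mem {M : Type*} [Monoid M] {S : Set M}
    (hS : ∀ s ∈ S, ∀ t ∈ S, s * t ∈ S) {u : M} (hu : u ∈ S) (n : ℕ) : u ^ (n + 1) ∈ S := by
  induction n with
  | zero => simpa using hu
  | succ n ih => exact pow_succ u (n + 1) ▸ hS _ ih _ hu

theorem le_of_sq_le_mul_succ {a : ℕ → ℝ} {c M : ℝ} (hc : 0 ≤ c) (hM : ∀ n, a n ≤ M)
    (hstep : ∀ n, a n ^ 2 ≤ c * a (n + 1)) : a 0 ≤ c := by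
  by_contra! hlt
  have hc₀ : 0 < c := by
    refine hc.lt_of_ne fun hc₀ => ?_
    have := hstep 0
    rw [← hc₀, zero_mul] at this
    nlinarith
  set r := a 0 / c
  have hr : 1 < r := (one_lt_div hc₀).2 hlt
  have hgrow : ∀ n, c * r ^ 2 ^ n ≤ a n := by
    intro n
    induction n with
    | zero => simp [r, mul_div_cancel₀ _ hc₀.ne']
    | succ n ih =>
      have hsq : (c * r ^ 2 ^ n) ^ 2 ≤ a n ^ 2 := pow_le_pow_left₀ (by positivity) ih 2
      have : c * (c * r ^ 2 ^ (n + 1)) ≤ c * a (n + 1) := by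
        rw [pow_succ, pow_mul]; nlinarith [hstep n]
      exact le_of_mul_le_mul_left this hc₀
  obtain ⟨n, hn⟩ := pow_unbounded_of_one_lt (M / c) hr
  have h2n : r ^ n ≤ r ^ 2 ^ n := pow_le_pow_right₀ hr.le Nat.lt_two_pow_self.le
  have := (div_lt_iff₀' hc₀).1 (hn.trans_le h2n)
  linarith [hgrow n, hM n]

section Reflection

open scoped InnerProductSpace ComplexConjugate

variable {𝕜 E : Type*} [RCLike 𝕜] [SeminormedAddCommGroup E] [InnerProductSpace 𝕜 E]
  {θ : E ≃ₗᵢ[𝕜] E}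

theorem inner_reflection_swap (hθ : Function.Involutive θ) (v w : E) :
    ⟪θ w, v⟫_𝕜 = conj ⟪θ v, w⟫_𝕜 := by
  rw [inner_conj_symm, ← θ.inner_map_map, hθ]

theorem re_inner_reflection_add_smul (hθ : Function.Involutive θ) (v w : E) (t : ℝ) :
    RCLike.re ⟪θ (v + (t : 𝕜) • w), v + (t : 𝕜) • w⟫_𝕜 =
      RCLike.re ⟪θ w, w⟫_𝕜 * (t * t) + 2 * RCLike.re ⟪θ v, w⟫_𝕜 * t + RCLike.re ⟪θ v, v⟫_𝕜 := by
  simp only [map_add, map_smul, inner_add_left, inner_add_right, inner_smul_real_left,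
    inner_smul_real_right, inner_reflection_swap hθ v w, RCLike.smul_re, RCLike.conj_re]
  ring

theorem sq_re_inner_reflection_le (hθ : Function.Involutive θ) {Ep : Submodule 𝕜 E}
    (hpos : ∀ v ∈ Ep, 0 ≤ RCLike.re ⟪θ v, v⟫_𝕜) {v w : E} (hv : v ∈ Ep) (hw : w ∈ Ep) :
    RCLike.re ⟪θ v, w⟫_𝕜 ^ 2 ≤ RCLike.re ⟪θ v, v⟫_𝕜 * RCLike.re ⟪θ w, w⟫_𝕜 := by
  have := discrim_le_zero fun t : ℝ =>
    re_inner_reflection_add_smul hθ v w t ▸ hpos _ (Ep.add_mem hv (Ep.smul_mem _ hw))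
  rw [discrim] at this
  linarith

end Reflection

section Representation

open scoped InnerProductSpace

variable {𝕜 E G : Type*} [RCLike 𝕜] [SeminormedAddCommGroup E] [InnerProductSpace 𝕜 E]
  [Group G] {θ : E ≃ₗᵢ[𝕜] E} {τ : G →* G} {π : G →* (E ≃ₗᵢ[𝕜] E)}

theorem inner_reflection_map (hθ : Function.Involutive θ)
    (hcomm : ∀ g v, θ (π g (θ v)) = π (τ g) v) (g : G) (v w : E) :
    ⟪θ (π g v), w⟫_𝕜 = ⟪θ v, π (τ g)⁻¹ w⟫_𝕜 := by
  rw [← hθ v, hcomm, hθ, LinearIsometryEquiv.inner_map_eq_flip, map_inv,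
    LinearIsometryEquiv.inv_def]

theorem re_inner_reflection_map_map (hθ : Function.Involutive θ)
    (hcomm : ∀ g v, θ (π g (θ v)) = π (τ g) v) (g : G) (v : E) :
    RCLike.re ⟪θ (π g v), π g v⟫_𝕜 = RCLike.re ⟪θ v, π ((τ g)⁻¹ * g) v⟫_𝕜 := by
  rw [inner_reflection_map hθ hcomm, map_mul, LinearIsometryEquiv.coe_mul, Function.comp_apply]

theorem re_inner_reflection_map_map_le (v : E) (g : G) :
    RCLike.re ⟪θ (π g v), π g v⟫_𝕜 ≤ ‖v‖ ^ 2 := by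
  simpa only [LinearIsometryEquiv.norm_map, sq] using re_inner_le_norm (θ (π g v)) (π g v)

theorem re_inner_reflection_map_le_of_symm (hθ : Function.Involutive θ)
    (hcomm : ∀ g v, θ (π g (θ v)) = π (τ g) v) {Ep : Submodule 𝕜 E}
    (hpos : ∀ v ∈ Ep, 0 ≤ RCLike.re ⟪θ v, v⟫_𝕜) {u : G} (hu : (τ u)⁻¹ = u) {v : E}
    (hv : ∀ n : ℕ, π (u ^ n) v ∈ Ep) :
    RCLike.re ⟪θ (π u v), π u v⟫_𝕜 ≤ RCLike.re ⟪θ v, v⟫_𝕜 := by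
  have hv₀ : v ∈ Ep := by simpa using hv 0
  have hstep (n : ℕ) : RCLike.re ⟪θ (π (u ^ 2 ^ n) v), π (u ^ 2 ^ n) v⟫_𝕜 ^ 2 ≤
      RCLike.re ⟪θ v, v⟫_𝕜 * RCLike.re ⟪θ (π (u ^ 2 ^ (n + 1)) v), π (u ^ 2 ^ (n + 1)) v⟫_𝕜 := by
    rw [re_inner_reflection_map_map hθ hcomm, map_pow, ← inv_pow, hu, ← pow_add, ← two_mul,
      ← pow_succ']
    exact sq_re_inner_reflection_le hθ hpos hv₀ (hv _)
  simpa using le_of_sq_le_mul_succ (hpos v hv₀)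
    (fun n => re_inner_reflection_map_map_le v (u ^ 2 ^ n)) hstep

end Representation

open scoped ComplexInnerProductSpace

theorem stmt_13_general
    (E : Type*) [NormedAddCommGroup E] [InnerProductSpace ℂ E]
    (G : Type*) [Group G] (τ : G →* G) (hτ : ∀ g, τ (τ g) = g)
    (S : Set G) (hSmul : ∀ s ∈ S, ∀ t ∈ S, s * t ∈ S)
    (hSsharp : ∀ s ∈ S, (τ s)⁻¹ ∈ S)
    (π : G →* (E ≃ₗᵢ[ℂ] E))
    (θ : E ≃ₗᵢ[ℂ] E) (hθ : ∀ v, θ (θ v) = v)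
    (hcomm : ∀ (g : G) (v : E), θ (π g (θ v)) = π (τ g) v)
    (Ep : Submodule ℂ E)
    (hEpPos : ∀ v ∈ Ep, 0 ≤ (⟪θ v, v⟫ : ℂ).re)
    (hEpInv : ∀ s ∈ S, ∀ v ∈ Ep, π s v ∈ Ep) :
    (∀ s ∈ S, ∀ v ∈ Ep, ∀ w ∈ Ep,
        (⟪θ (π s v), w⟫ : ℂ) = ⟪θ v, π ((τ s)⁻¹) w⟫) ∧
    (∀ s ∈ S, ∀ v ∈ Ep,
        ((⟪θ (π s v), π s v⟫ : ℂ)).re ≤ ((⟪θ v, v⟫ : ℂ)).re) := by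
  refine ⟨fun s _ v _ w _ => inner_reflection_map hθ hcomm s v w, fun s hs v hv => ?_⟩
  set u := (τ s)⁻¹ * s
  have hu : (τ u)⁻¹ = u := by simp [u, hτ]
  have huS : u ∈ S := hSmul _ (hSsharp s hs) _ hs
  have hpow : ∀ n : ℕ, π (u ^ n) v ∈ Ep
    | 0 => by simpa using hv
    | n + 1 => hEpInv _ (pow_succ_mem_of_mul_mem hSmul huS n) v hv
  have hq₀ : 0 ≤ (⟪θ v, v⟫).re := hEpPos v hv
  refine (pow_le_pow_iff_left₀ (hEpPos _ (hEpInv s hs v hv)) hq₀ two_ne_zero).1 ?_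
  calc (⟪θ (π s v), π s v⟫).re ^ 2 = (⟪θ v, π u v⟫).re ^ 2 :=
        congrArg (· ^ 2) (re_inner_reflection_map_map hθ hcomm s v)
    _ ≤ (⟪θ v, v⟫).re * (⟪θ (π u v), π u v⟫).re :=
        sq_re_inner_reflection_le hθ hEpPos hv (hEpInv u huS v hv)
    _ ≤ (⟪θ v, v⟫).re * (⟪θ v, v⟫).re :=
        mul_le_mul_of_nonneg_left (re_inner_reflection_map_le_of_symm hθ hcomm hEpPos hu hpow) hq₀
    _ = (⟪θ v, v⟫).re ^ 2 := (sq _).symm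

/-- Let `π` be a reflection positive unitary representation of `(G,τ,S)`
on the reflection positive Hilbert space `(E, E₊, θ)`. Then for `s, t ∈ S` and
`v, w ∈ E₊`: (a) `⟨θ(π(s)v), w⟩ = ⟨θ v, π(τ(s)⁻¹) w⟩`, and (b)
`Re⟨θ(π(s)v), π(s)v⟩ ≤ Re⟨θ v, v⟩`, i.e. `S` acts by contractions with respect to the
positive semidefinite form `⟨θ·,·⟩` on `E₊`. -/
theorem stmt_13
    (E : Type*) [NormedAddCommGroup E] [InnerProductSpace ℂ E] [CompleteSpace E]
    (G : Type*) [Group G] (τ : G →* G) (hτ : ∀ g, τ (τ g) = g)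
    (S : Set G) (hSne : S.Nonempty) (hSmul : ∀ s ∈ S, ∀ t ∈ S, s * t ∈ S)
    (hSsharp : ∀ s ∈ S, (τ s)⁻¹ ∈ S)
    (π : G →* (E ≃ₗᵢ[ℂ] E))
    (θ : E ≃ₗᵢ[ℂ] E) (hθ : ∀ v, θ (θ v) = v)
    (hcomm : ∀ (g : G) (v : E), θ (π g (θ v)) = π (τ g) v)
    (Ep : Submodule ℂ E) (hEpClosed : IsClosed (Ep : Set E))
    (hEpPos : ∀ v ∈ Ep, 0 ≤ (⟪θ v, v⟫ : ℂ).re)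
    (hEpInv : ∀ s ∈ S, ∀ v ∈ Ep, π s v ∈ Ep) :
    (∀ s ∈ S, ∀ v ∈ Ep, ∀ w ∈ Ep,
        (⟪θ (π s v), w⟫ : ℂ) = ⟪θ v, π ((τ s)⁻¹) w⟫) ∧
    (∀ s ∈ S, ∀ v ∈ Ep,
        ((⟪θ (π s v), π s v⟫ : ℂ)).re ≤ ((⟪θ v, v⟫ : ℂ)).re) :=
  stmt_13_general E G τ hτ S hSmul hSsharp π θ hθ hcomm Ep hEpPos hEpInv
end

section
/- Let E be a complex Hilbert space, G a group, τ : G → G an involutive automorphism, and S ⊆ G a subsemigroup with τ(s)⁻¹ ∈ S for all s ∈ S. Let π : G → U(E) be a homomorphism into the unitary group of E and θ a unitary involution of E with θ ∘ π(g) ∘ θ = π(τ(g)) for all g. Let F ⊆ E be a closed subspace with θv = v for every v ∈ F, assume that the closed subspace E₊ spanned by {π(s)v : s ∈ S, v ∈ F} satisfies Re⟨θu, u⟩ ≥ 0 for all u ∈ E₊, and let P : E → F be the orthogonal projection. Define φ(g) := P ∘ π(g)|_F as a bounded operator on F. Then: (a) φ(1) = id_F; (b) φ(τ(g)) = φ(g)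 for all g ∈ G; (c) the operator-valued kernel (g,h) ↦ φ(g h⁻¹) is positive definite on G, i.e. for all m ∈ ℕ, g₁,…,g_m ∈ G and v₁,…,v_m ∈ F the sum ∑_{j,k=1}^m ⟨φ(g_j g_k⁻¹) v_k, v_j⟩ is a nonnegative real number; and (d) the kernel (s,t) ↦ φ(s · τ(t)⁻¹) is positive definite on S in the same sense. -/
open scoped ComplexInnerProductSpace ComplexOrder

/-! Both kernels are Gram sums. For (c), `∑ ⟪v j, π (g j * (g k)⁻¹) (v k)⟫ = ‖∑ π (g k)⁻¹ (v k)‖²`.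
For (d), the matrix coefficients of `π` on `F` are `τ`-invariant, which turns the sum into
`⟪u, θ u⟫` with `u = ∑ π (τ (g k))⁻¹ (v k) ∈ E₊`; this number is real because `θ` is a unitary
involution, and its real part is nonnegative by `θ`-positivity of `E₊`. -/

section UnitaryRepresentation

variable {E G ι : Type*} [NormedAddCommGroup E] [InnerProductSpace ℂ E] [Group G] [Fintype ι]
  (π : G →* (E ≃ₗᵢ[ℂ] E))

theorem inner_map_map_eq_inner_map_inv_mul (g h : G) (a b : E) :
    ⟪π g a, π h b⟫ = ⟪a, π (g⁻¹ * h) b⟫ := by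
  rw [show π h = π g * π (g⁻¹ * h) by rw [← map_mul, mul_inv_cancel_left],
    LinearIsometryEquiv.coe_mul, Function.comp_apply, LinearIsometryEquiv.inner_map_map]

theorem inner_sum_map_sum_map (g h : ι → G) (v w : ι → E) :
    ⟪∑ j, π (g j) (v j), ∑ k, π (h k) (w k)⟫ = ∑ j, ∑ k, ⟪v j, π ((g j)⁻¹ * h k) (w k)⟫ := by
  rw [sum_inner]
  simp only [inner_sum, inner_map_map_eq_inner_map_inv_mul]

theorem sum_sum_inner_map_mul_inv_nonneg (g : ι → G) (v : ι → E) :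
    0 ≤ ∑ j, ∑ k, ⟪v j, π (g j * (g k)⁻¹) (v k)⟫ := by
  set u := ∑ k, π (g k)⁻¹ (v k)
  have hgram : ∑ j, ∑ k, ⟪v j, π (g j * (g k)⁻¹) (v k)⟫ = ⟪u, u⟫ := by
    simp only [u, inner_sum_map_sum_map, inv_inv]
  rw [hgram, inner_self_eq_norm_sq_to_K]
  positivity

end UnitaryRepresentation

theorem LinearIsometryEquiv.inner_apply_nonneg_of_involutive {E : Type*} [NormedAddCommGroup E]
    [InnerProductSpace ℂ E] (θ : E ≃ₗᵢ[ℂ] E) (hθ : ∀ v, θ (θ v) = v) {u : E}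
    (hu : 0 ≤ (⟪θ u, u⟫).re) : 0 ≤ ⟪u, θ u⟫ := by
  have hswap : ⟪u, θ u⟫ = ⟪θ u, u⟫ := by rw [← θ.inner_map_map, hθ]
  have hreal : (starRingEnd ℂ) ⟪u, θ u⟫ = ⟪u, θ u⟫ := by rw [inner_conj_symm, hswap]
  rw [← Complex.conj_eq_iff_re.mp hreal, hswap]
  exact_mod_cast hu

section ReflectionPositivity

variable {E G : Type*} [NormedAddCommGroup E] [InnerProductSpace ℂ E] [Group G]
  {τ : G →* G} {π : G →* (E ≃ₗᵢ[ℂ] E)} {θ : E ≃ₗᵢ[ℂ] E} {F : Submodule ℂ E}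

theorem inner_map_comp_eq_inner_map (hcomm : ∀ (g : G) (v : E), θ (π g (θ v)) = π (τ g) v)
    (hFfix : ∀ v ∈ F, θ v = v) {v w : E} (hv : v ∈ F) (hw : w ∈ F) (g : G) :
    ⟪w, π (τ g) v⟫ = ⟪w, π g v⟫ := by
  rw [← hcomm, hFfix v hv]
  conv_lhs => rw [← hFfix w hw]
  exact θ.inner_map_map _ _

theorem sum_sum_inner_map_mul_inv_comp_eq (hcomm : ∀ (g : G) (v : E), θ (π g (θ v)) = π (τ g) v)
    (hFfix : ∀ v ∈ F, θ v = v) {ι : Type*} [Fintype ι] (g : ι → G) (v : ι → E) (hv : ∀ i, v i ∈ F) :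
    ∑ j, ∑ k, ⟪v j, π (g j * (τ (g k))⁻¹) (v k)⟫ =
      ⟪∑ k, π (τ (g k))⁻¹ (v k), θ (∑ k, π (τ (g k))⁻¹ (v k))⟫ := by
  have hθ_sum : θ (∑ k, π (τ (g k))⁻¹ (v k)) = ∑ k, π (τ (τ (g k))⁻¹) (v k) := by
    simp only [map_sum, ← hcomm, hFfix _ (hv _)]
  rw [hθ_sum, inner_sum_map_sum_map]
  refine Finset.sum_congr rfl fun j _ => Finset.sum_congr rfl fun k _ => ?_
  rw [← inner_map_comp_eq_inner_map hcomm hFfix (hv k) (hv j), inv_inv, map_mul, map_inv]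

end ReflectionPositivity

theorem stmt_14_general
    (E : Type*) [NormedAddCommGroup E] [InnerProductSpace ℂ E]
    (G : Type*) [Group G] (τ : G →* G)
    (S : Set G)
    (hSsharp : ∀ s ∈ S, (τ s)⁻¹ ∈ S)
    (π : G →* (E ≃ₗᵢ[ℂ] E))
    (θ : E ≃ₗᵢ[ℂ] E) (hθ : ∀ v, θ (θ v) = v)
    (hcomm : ∀ (g : G) (v : E), θ (π g (θ v)) = π (τ g) v)
    (F : Submodule ℂ E)
    (hFfix : ∀ v ∈ F, θ v = v)
    (hpos : ∀ u ∈ closure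
        ((Submodule.span ℂ {w : E | ∃ s ∈ S, ∃ v ∈ F, w = π s v} : Submodule ℂ E) : Set E),
      0 ≤ ((⟪θ u, u⟫ : ℂ)).re) :
    (∀ v ∈ F, ∀ w ∈ F, (⟪w, π 1 v⟫ : ℂ) = ⟪w, v⟫) ∧
    (∀ (g : G), ∀ v ∈ F, ∀ w ∈ F, (⟪w, π (τ g) v⟫ : ℂ) = ⟪w, π g v⟫) ∧
    (∀ (m : ℕ) (g : Fin m → G) (v : Fin m → E), (∀ i, v i ∈ F) →
      0 ≤ ∑ j : Fin m, ∑ k : Fin m, (⟪v j, π (g j * (g k)⁻¹) (v k)⟫ : ℂ)) ∧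
    (∀ (m : ℕ) (g : Fin m → G) (v : Fin m → E), (∀ i, g i ∈ S) → (∀ i, v i ∈ F) →
      0 ≤ ∑ j : Fin m, ∑ k : Fin m, (⟪v j, π (g j * (τ (g k))⁻¹) (v k)⟫ : ℂ)) := by
  refine ⟨fun v _ w _ => by rw [map_one, LinearIsometryEquiv.coe_one, id],
    fun g v hv w hw => inner_map_comp_eq_inner_map hcomm hFfix hv hw g,
    fun m g v _ => sum_sum_inner_map_mul_inv_nonneg π g v, fun m g v hg hv => ?_⟩
  rw [sum_sum_inner_map_mul_inv_comp_eq hcomm hFfix g v hv]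
  refine θ.inner_apply_nonneg_of_involutive hθ (hpos _ (subset_closure ?_))
  exact Submodule.sum_mem _ fun k _ => Submodule.subset_span ⟨_, hSsharp _ (hg k), v k, hv k, rfl⟩

/-- Let `(π, E)` be a unitary representation of `G` with unitary
involution `θ` satisfying `θ π(g) θ = π(τ(g))`, let `F ⊆ E` be a closed subspace fixed
pointwise by `θ`, and assume the closed subspace `E₊` generated by `π(S)F` is
`θ`-positive. Then the `B(F)`-valued function `φ(g) = P π(g) P*` (expressed via its
matrix coefficients `⟨φ(g)v, w⟩ = ⟨π(g)v, w⟩` for `v, w ∈ F`) satisfies: (a) `φ(1) = 1`;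
(b) `φ ∘ τ = φ`; (c) the kernel `(g,h) ↦ φ(g h⁻¹)` is positive definite on `G`;
(d) the kernel `(s,t) ↦ φ(s τ(t)⁻¹)` is positive definite on `S`. -/
theorem stmt_14
    (E : Type*) [NormedAddCommGroup E] [InnerProductSpace ℂ E] [CompleteSpace E]
    (G : Type*) [Group G] (τ : G →* G) (hτ : ∀ g, τ (τ g) = g)
    (S : Set G) (hSne : S.Nonempty) (hSmul : ∀ s ∈ S, ∀ t ∈ S, s * t ∈ S)
    (hSsharp : ∀ s ∈ S, (τ s)⁻¹ ∈ S)
    (π : G →* (E ≃ₗᵢ[ℂ] E))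
    (θ : E ≃ₗᵢ[ℂ] E) (hθ : ∀ v, θ (θ v) = v)
    (hcomm : ∀ (g : G) (v : E), θ (π g (θ v)) = π (τ g) v)
    (F : Submodule ℂ E) (hFClosed : IsClosed (F : Set E))
    (hFfix : ∀ v ∈ F, θ v = v)
    (hpos : ∀ u ∈ closure
        ((Submodule.span ℂ {w : E | ∃ s ∈ S, ∃ v ∈ F, w = π s v} : Submodule ℂ E) : Set E),
      0 ≤ ((⟪θ u, u⟫ : ℂ)).re) :
    (∀ v ∈ F, ∀ w ∈ F, (⟪w, π 1 v⟫ : ℂ) = ⟪w, v⟫) ∧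
    (∀ (g : G), ∀ v ∈ F, ∀ w ∈ F, (⟪w, π (τ g) v⟫ : ℂ) = ⟪w, π g v⟫) ∧
    (∀ (m : ℕ) (g : Fin m → G) (v : Fin m → E), (∀ i, v i ∈ F) →
      0 ≤ ∑ j : Fin m, ∑ k : Fin m, (⟪v j, π (g j * (g k)⁻¹) (v k)⟫ : ℂ)) ∧
    (∀ (m : ℕ) (g : Fin m → G) (v : Fin m → E), (∀ i, g i ∈ S) → (∀ i, v i ∈ F) →
      0 ≤ ∑ j : Fin m, ∑ k : Fin m, (⟪v j, π (g j * (τ (g k))⁻¹) (v k)⟫ : ℂ)) :=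
  stmt_14_general E G τ S hSsharp π θ hθ hcomm F hFfix hpos
end

section
/- Let n ≥ 1 and let Ω = {x ∈ ℝⁿ : x₀ > 0 and x₀² > x₁² + ⋯ + x_{n−1}²} be the open forward light cone. For every z ∈ ℂⁿ whose real part lies in Ω (i.e. z = x + iy with x ∈ Ω, y ∈ ℝⁿ), the value of the complex bilinear Lorentz form Δ(z) := z₀² − z₁² − ⋯ − z_{n−1}² is nonzero. -/
/-! Write `z = x + i y` and `x' = (x₁, …, x_{n-1})`, `y' = (y₁, …, y_{n-1})`. If `Δ(z) = 0` then
`x₀ y₀ = ⟨x', y'⟩`, and Cauchy–Schwarz with `‖x'‖ < |x₀|` gives `|y₀| ≤ ‖y'‖`; hence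
`Re Δ(z) = (x₀² - ‖x'‖²) - (y₀² - ‖y'‖²) > 0`. -/

open Finset

theorem sum_sq_sub_sq_lt_of_mul_eq_sum_mul {ι : Type*} (s : Finset ι) {a b : ℝ} {u v : ι → ℝ}
    (hu : ∑ j ∈ s, u j ^ 2 < a ^ 2) (hab : a * b = ∑ j ∈ s, u j * v j) :
    ∑ j ∈ s, (u j ^ 2 - v j ^ 2) < a ^ 2 - b ^ 2 := by
  have hcs := sum_mul_sq_le_sq_mul_sq s u v
  have hv : 0 ≤ ∑ j ∈ s, v j ^ 2 := sum_nonneg fun j _ => sq_nonneg (v j)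
  have ha : 0 < a ^ 2 := (sum_nonneg fun j _ => sq_nonneg (u j)).trans_lt hu
  have hb : b ^ 2 ≤ ∑ j ∈ s, v j ^ 2 := by
    refine le_of_mul_le_mul_left ?_ ha
    calc a ^ 2 * b ^ 2 = (∑ j ∈ s, u j * v j) ^ 2 := by rw [← hab]; ring
      _ ≤ (∑ j ∈ s, u j ^ 2) * ∑ j ∈ s, v j ^ 2 := hcs
      _ ≤ a ^ 2 * ∑ j ∈ s, v j ^ 2 := mul_le_mul_of_nonneg_right hu.le hv
  rw [sum_sub_distrib]
  linarith

theorem Complex.re_im_of_sq_eq_sum_sq {ι : Type*} {s : Finset ι} {c : ℂ} {w : ι → ℂ}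
    (h : c ^ 2 = ∑ j ∈ s, w j ^ 2) :
    c.re ^ 2 - c.im ^ 2 = ∑ j ∈ s, ((w j).re ^ 2 - (w j).im ^ 2) ∧
      c.re * c.im = ∑ j ∈ s, (w j).re * (w j).im := by
  have hre := congrArg Complex.re h
  have him := congrArg Complex.im h
  simp only [Complex.re_sum, Complex.im_sum, sq, Complex.mul_re, Complex.mul_im] at hre him
  refine ⟨by simpa only [sq] using hre, ?_⟩
  rw [mul_comm c.im, ← two_mul] at him
  simp only [mul_comm (w _).im, ← two_mul, ← mul_sum] at him
  linarith

theorem sum_ite_eq_zero_eq_sum_erase {ι M : Type*} [Fintype ι] [DecidableEq ι] [AddCommMonoid M]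
    (e : ι) (f : ι → M) : ∑ j, (if j = e then 0 else f j) = ∑ j ∈ univ.erase e, f j := by
  rw [sum_ite, sum_const_zero, zero_add, filter_ne']

theorem stmt_15_general (n : ℕ) (hn : 0 < n) (z : Fin n → ℂ)
    (hcone : ∑ j : Fin n, (if j = (⟨0, hn⟩ : Fin n) then 0 else ((z j).re) ^ 2)
        < ((z ⟨0, hn⟩).re) ^ 2) :
    (z ⟨0, hn⟩) ^ 2 - ∑ j : Fin n, (if j = (⟨0, hn⟩ : Fin n) then 0 else (z j) ^ 2) ≠ 0 := by
  rw [sum_ite_eq_zero_eq_sum_erase] at hcone ⊢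
  intro hΔ
  obtain ⟨hre, him⟩ := Complex.re_im_of_sq_eq_sum_sq (sub_eq_zero.mp hΔ)
  exact (sum_sq_sub_sq_lt_of_mul_eq_sum_mul _ hcone him).ne hre.symm

/-- Let `Ω ⊆ ℝⁿ` be the open forward light cone. For every `z ∈ ℂⁿ` with
`Re z ∈ Ω`, the complex bilinear Lorentz form `Δ(z) = z₀² - z₁² - ⋯ - z_{n-1}²` is
nonzero. -/
theorem stmt_15 (n : ℕ) (hn : 0 < n) (z : Fin n → ℂ)
    (hx0 : 0 < (z ⟨0, hn⟩).re)
    (hcone : ∑ j : Fin n, (if j = (⟨0, hn⟩ : Fin n) then 0 else ((z j).re) ^ 2)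
        < ((z ⟨0, hn⟩).re) ^ 2) :
    (z ⟨0, hn⟩) ^ 2 - ∑ j : Fin n, (if j = (⟨0, hn⟩ : Fin n) then 0 else (z j) ^ 2) ≠ 0 :=
  stmt_15_general n hn z hcone
end

section
/- Let G be a group acting by homeomorphisms on a topological space X, let τ : G → G be an involutive automorphism, and let T : X → X be a homeomorphism with T ∘ T = id and T(g·x) = τ(g)·T(x) for all g ∈ G, x ∈ X. Let D ⊆ X be an open subset with T(D) = interior(X \ D). Then the compression semigroup S_D := {g ∈ G : g·D ⊆ D} is invariant under the involution g ↦ g♯ := τ(g)⁻¹; that is, if g·D ⊆ D then τ(g)⁻¹·D ⊆ D. -/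
/-!
Since `g` maps `D` into `D` and acts continuously, `g⁻¹` maps the open set `interior Dᶜ` into
itself. The involution `T` exchanges `D` and `interior Dᶜ` and intertwines `g⁻¹` with
`τ(g)⁻¹`, so transporting this along `T` gives `τ(g)⁻¹ • D ⊆ D`.
-/

open Set

theorem Set.MapsTo.preimage_interior_compl_subset {X Y : Type*} [TopologicalSpace X]
    [TopologicalSpace Y] {f : X → Y} {s : Set X} {t : Set Y} (hf : Continuous f)
    (hst : MapsTo f s t) : f ⁻¹' interior tᶜ ⊆ interior sᶜ :=
  (preimage_interior_subset_interior_preimage hf).trans <|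
    interior_mono fun _ hx hxs => hx (hst hxs)

theorem inv_smul_mem_interior_compl {G X : Type*} [Group G] [TopologicalSpace X] [MulAction G X]
    {g : G} {s : Set X} (hcont : Continuous (fun x : X => g • x))
    (hg : MapsTo (fun x : X => g • x) s s) {y : X} (hy : y ∈ interior sᶜ) :
    g⁻¹ • y ∈ interior sᶜ :=
  hg.preimage_interior_compl_subset hcont (by simpa only [mem_preimage, smul_inv_smul] using hy)

theorem stmt_19_general (G X : Type*) [Group G] [TopologicalSpace X] [MulAction G X]
    (hcont : ∀ g : G, Continuous (fun x : X => g • x))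
    (τ : G →* G)
    (T : X → X) (hTinv : ∀ x, T (T x) = x)
    (hequiv : ∀ (g : G) (x : X), T (g • x) = τ g • T x)
    (D : Set X) (hTD : T '' D = interior Dᶜ)
    (g : G) (hg : ∀ x ∈ D, g • x ∈ D) :
    ∀ x ∈ D, (τ g)⁻¹ • x ∈ D := by
  intro x hx
  have hTx : T x ∈ interior Dᶜ := hTD ▸ mem_image_of_mem T hx
  have hmem : g⁻¹ • T x ∈ T '' D := hTD ▸ inv_smul_mem_interior_compl (hcont g) hg hTx
  rwa [mem_image_iff_of_inverse hTinv hTinv, hequiv, hTinv, map_inv] at hmem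

/-- Let a group `G` act by homeomorphisms on a topological space `X`,
let `τ` be an involutive automorphism of `G`, and `T : X → X` an involutive
homeomorphism with `T(g·x) = τ(g)·T(x)`. If `D ⊆ X` is open with
`T(D) = interior(X \ D)`, then the compression semigroup `S_D = {g : g·D ⊆ D}` is
invariant under `g ↦ τ(g)⁻¹`: if `g·D ⊆ D` then `τ(g)⁻¹·D ⊆ D`. -/
theorem stmt_19 (G X : Type*) [Group G] [TopologicalSpace X] [MulAction G X]
    (hcont : ∀ g : G, Continuous (fun x : X => g • x))
    (τ : G →* G) (hτ : ∀ g, τ (τ g) = g)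
    (T : X → X) (hTcont : Continuous T) (hTinv : ∀ x, T (T x) = x)
    (hequiv : ∀ (g : G) (x : X), T (g • x) = τ g • T x)
    (D : Set X) (hDopen : IsOpen D) (hTD : T '' D = interior Dᶜ)
    (g : G) (hg : ∀ x ∈ D, g • x ∈ D) :
    ∀ x ∈ D, (τ g)⁻¹ • x ∈ D :=
  stmt_19_general G X hcont τ T hTinv hequiv D hTD g hg
end
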